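/- arXiv:2410.10040 — 3 statements merged into one kernel-verified Lean document; each statement's English description precedes it below -/
import Mathlib

section
/- Let M ∈ (0, α|Ω|), assume U′ is strictly increasing on (0,α), and let ρ̂ be an L¹-local minimiser of ℱ on 𝒜_M. Then there exists a constant C ∈ ℝ such that ρ̂(x) = g(C − V(x)) for a.e. x ∈ Ω, where g = T_{0,α}∘(U′)⁻¹. -/
open Set MeasureTheory Filter Topology

/-!
Moving a little mass from a set where `slope U (ρ̂ - h') ρ̂ + V > q` to a set where
`slope U ρ̂ (ρ̂ + h) + V < p`, with `p < q`, lowers the energy by convexity of `U`; at a local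
minimiser one of the two sets is therefore null. Over countably many step sizes and rational
thresholds this produces a Lagrange multiplier `C` with
`slope U (ρ̂ - h') ρ̂ + V ≤ C ≤ slope U ρ̂ (ρ̂ + h) + V` almost everywhere; both families of sets
are non-trivial because `0 < M < α |Ω|`. Letting `h, h' → 0` gives `U' ρ̂ = C - V` where
`0 < ρ̂ < α`, `C - V ≤ ζ̲` where `ρ̂ = 0` and `ζ̄ ≤ C - V` where `ρ̂ = α`, that is `ρ̂ = g (C - V)`.
-/

section Convex

variable {α s h y : ℝ} {U : ℝ → ℝ}

lemma ConvexOn.sub_le_mul_slope_add (hU : ConvexOn ℝ (Icc 0 α) U) (hy : y ∈ Icc 0 α)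
    (hs : 0 < s) (hsh : s ≤ h) (hyh : y + h ≤ α) :
    U (y + s) - U y ≤ s * slope U y (y + h) := by
  have hmono := hU.slope_mono hy (b := y + h) (a := y + s)
    ⟨⟨by linarith [hy.1], by linarith⟩, by simp [hs.ne']⟩
    ⟨⟨by linarith [hy.1], hyh⟩, by simp; linarith⟩ (by linarith)
  have hdiff := sub_smul_slope U y (y + s)
  simp only [add_sub_cancel_left, smul_eq_mul, vsub_eq_sub] at hdiff
  nlinarith

lemma ConvexOn.mul_slope_sub_le_sub (hU : ConvexOn ℝ (Icc 0 α) U) (hy : y ∈ Icc 0 α)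
    (hs : 0 < s) (hsh : s ≤ h) (hhy : h ≤ y) :
    s * slope U (y - h) y ≤ U y - U (y - s) := by
  have hmono := hU.slope_mono hy (a := y - h) (b := y - s)
    ⟨⟨by linarith, by linarith [hy.2]⟩, by simp; linarith⟩
    ⟨⟨by linarith, by linarith [hy.2]⟩, by simp [hs.ne']⟩ (by linarith)
  have hdiff := sub_smul_slope U (y - s) y
  simp only [sub_sub_cancel, smul_eq_mul, vsub_eq_sub] at hdiff
  rw [slope_comm, slope_comm U y] at hmono
  nlinarith

lemma ConvexOn.slope_sub_le_slope_add (hU : ConvexOn ℝ (Icc 0 α) U) (hy : y ∈ Icc 0 α)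
    {h' : ℝ} (hh : 0 < h) (hh' : 0 < h') (hyh : y + h ≤ α) (hhy : h' ≤ y) :
    slope U (y - h') y ≤ slope U y (y + h) := by
  rw [slope_comm]
  exact hU.slope_mono hy ⟨⟨by linarith, by linarith [hy.2]⟩, by simp; linarith⟩
    ⟨⟨by linarith [hy.1], hyh⟩, by simp; linarith⟩ (by linarith)

end Convex

section Separation

variable {X : Type*} [MeasurableSpace X] {μ : Measure X} {s : Set X} {f : X → ℝ} {c : ℝ}

lemma ae_le_of_forall_rat_lt (h : ∀ q : ℚ, c < q → μ {x | x ∈ s ∧ q < f x} = 0) :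
    ∀ᵐ x ∂μ, x ∈ s → f x ≤ c := by
  have hq : ∀ q : ℚ, ∀ᵐ x ∂μ, c < q → ¬(x ∈ s ∧ q < f x) := fun q => by
    by_cases hcq : c < q
    · filter_upwards [measure_eq_zero_iff_ae_notMem.mp (h q hcq)] with x hx _ using hx
    · exact .of_forall fun x h => absurd h hcq
  filter_upwards [ae_all_iff.mpr hq] with x hx hxs
  by_contra! hfx
  obtain ⟨q, hcq, hqf⟩ := exists_rat_btwn hfx
  exact hx q hcq ⟨hxs, hqf⟩

lemma ae_ge_of_forall_lt_rat (h : ∀ q : ℚ, q < c → μ {x | x ∈ s ∧ f x < q} = 0) :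
    ∀ᵐ x ∂μ, x ∈ s → c ≤ f x := by
  have := ae_le_of_forall_rat_lt (μ := μ) (s := s) (f := -f) (c := -c) fun q hq => by
    simpa [lt_neg] using h (-q) (by push_cast; linarith)
  filter_upwards [this] with x hx hxs using neg_le_neg_iff.mp (hx hxs)

lemma exists_measure_setOf_lt_ne_zero (hs : μ s ≠ 0) (f : X → ℝ) :
    ∃ c : ℝ, μ {x | x ∈ s ∧ f x < c} ≠ 0 := by
  by_contra! h
  refine hs (measure_mono_null (fun x hx => ?_) (measure_iUnion_null fun n : ℕ => h n))
  obtain ⟨n, hn⟩ := exists_nat_gt (f x)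
  exact mem_iUnion.mpr ⟨n, hx, hn⟩

lemma exists_measure_one_div_le_ne_zero (hpos : 0 < ∫ x, f x ∂μ) :
    ∃ n : ℕ, μ {x | 1 / ((n : ℝ) + 1) ≤ f x} ≠ 0 := by
  by_contra! h
  have hnull : μ {x | 0 < f x} = 0 := measure_mono_null (fun x hx => by
    obtain ⟨n, hn⟩ := exists_nat_one_div_lt (show 0 < f x from hx)
    exact mem_iUnion.mpr ⟨n, hn.le⟩) (measure_iUnion_null h)
  have hf0 : f ≤ᵐ[μ] 0 := by
    filter_upwards [measure_eq_zero_iff_ae_notMem.mp hnull] with x hx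
    simpa using hx
  linarith [integral_nonpos_of_ae hf0]

theorem exists_ae_separating_const {ι κ : Type*} [Countable ι] [Countable κ]
    (A : ι → Set X) (F : ι → X → ℝ) (B : κ → Set X) (G : κ → X → ℝ)
    (hsep : ∀ i j p q, p < q → μ {x | x ∈ A i ∧ F i x < p} = 0 ∨ μ {x | x ∈ B j ∧ q < G j x} = 0)
    (hA : ∃ i, μ (A i) ≠ 0) (hB : ∃ j, μ (B j) ≠ 0) :
    ∃ C, ∀ᵐ x ∂μ, (∀ i, x ∈ A i → C ≤ F i x) ∧ (∀ j, x ∈ B j → G j x ≤ C) := by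
  set S := {t : ℝ | ∃ j, μ {x | x ∈ B j ∧ t < G j x} ≠ 0}
  have hS : S.Nonempty := by
    obtain ⟨j, hj⟩ := hB
    obtain ⟨c, hc⟩ := exists_measure_setOf_lt_ne_zero hj (-G j)
    exact ⟨-c, j, by simpa [neg_lt] using hc⟩
  have hS_bdd : BddAbove S := by
    obtain ⟨i, hi⟩ := hA
    obtain ⟨c, hc⟩ := exists_measure_setOf_lt_ne_zero hi (F i)
    refine ⟨c, fun t ⟨j, hj⟩ => not_lt.mp fun hct => ?_⟩
    exact (hsep i j c t hct).elim hc hj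
  refine ⟨sSup S, ?_⟩
  have hF : ∀ i, ∀ᵐ x ∂μ, x ∈ A i → sSup S ≤ F i x := fun i =>
    ae_ge_of_forall_lt_rat fun q hq => by
      obtain ⟨t, ⟨j, hj⟩, hqt⟩ := exists_lt_of_lt_csSup hS hq
      exact (hsep i j q t hqt).resolve_right hj
  have hG : ∀ j, ∀ᵐ x ∂μ, x ∈ B j → G j x ≤ sSup S := fun j =>
    ae_le_of_forall_rat_lt fun q hq => by
      by_contra hj
      exact (le_csSup hS_bdd ⟨j, hj⟩).not_gt hq
  filter_upwards [ae_all_iff.mpr hF, ae_all_iff.mpr hG] with x hxF hxG using ⟨hxF, hxG⟩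

end Separation

lemma abs_indicator_sub_indicator {X : Type*} {A B : Set X} {s t : ℝ} (hAB : Disjoint A B)
    (hs : 0 ≤ s) (ht : 0 ≤ t) (x : X) :
    |A.indicator (fun _ => s) x - B.indicator (fun _ => t) x| =
      A.indicator (fun _ => s) x + B.indicator (fun _ => t) x := by
  by_cases hxA : x ∈ A
  · simp [hxA, Set.disjoint_left.mp hAB hxA, abs_of_nonneg hs]
  by_cases hxB : x ∈ B
  · simp [hxA, hxB, abs_of_nonneg ht]
  · simp [hxA, hxB]

section ConstrainedLocalMin

variable {X : Type*} [MeasurableSpace X] {μ : Measure X} {α : ℝ} {U : ℝ → ℝ} {W ρ : X → ℝ}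

/-- `ρ` is an `L¹`-local minimiser of `ℱ[σ] = ∫ U(σ) + W σ` on `𝒜_M` with `M = ∫ ρ`. -/
def IsConstrainedLocalMin (μ : Measure X) (α : ℝ) (U : ℝ → ℝ) (W ρ : X → ℝ) : Prop :=
  ∃ r : ℝ, 0 < r ∧ ∀ σ : X → ℝ, Integrable σ μ → (∀ᵐ x ∂μ, σ x ∈ Icc 0 α) →
    ∫ x, σ x ∂μ = ∫ x, ρ x ∂μ → ∫ x, |σ x - ρ x| ∂μ < r →
    ∫ x, (U (ρ x) + W x * ρ x) ∂μ ≤ ∫ x, (U (σ x) + W x * σ x) ∂μ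

lemma IsConstrainedLocalMin.congr {U₁ : ℝ → ℝ} {W₁ ρ₁ : X → ℝ}
    (hmin : IsConstrainedLocalMin μ α U W ρ) (hρ : ∀ᵐ x ∂μ, ρ x ∈ Icc 0 α) (hρ₁ : ρ₁ =ᵐ[μ] ρ)
    (hW₁ : W₁ =ᵐ[μ] W) (hU₁ : EqOn U₁ U (Icc 0 α)) : IsConstrainedLocalMin μ α U₁ W₁ ρ₁ := by
  obtain ⟨r, hr, hmin⟩ := hmin
  refine ⟨r, hr, fun σ hσ hσmem hmass hdist => ?_⟩
  have hEρ : ∫ x, (U₁ (ρ₁ x) + W₁ x * ρ₁ x) ∂μ = ∫ x, (U (ρ x) + W x * ρ x) ∂μ :=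
    integral_congr_ae <| by
      filter_upwards [hρ, hρ₁, hW₁] with x hx hx' hWx; rw [hx', hWx, hU₁ hx]
  have hEσ : ∫ x, (U₁ (σ x) + W₁ x * σ x) ∂μ = ∫ x, (U (σ x) + W x * σ x) ∂μ :=
    integral_congr_ae <| by filter_upwards [hσmem, hW₁] with x hx hWx; rw [hWx, hU₁ hx]
  rw [hEρ, hEσ]
  refine hmin σ hσ hσmem (hmass.trans (integral_congr_ae hρ₁)) ?_
  rwa [integral_congr_ae (by filter_upwards [hρ₁] with x hx; rw [hx])] at hdist

variable [IsFiniteMeasure μ]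

lemma integrable_comp_add_mul_of_mem_Icc (hU : Continuous U)
    (hW : Integrable W μ) {σ : X → ℝ} (hσ : Measurable σ) (hσmem : ∀ x, σ x ∈ Icc 0 α) :
    Integrable (fun x => U (σ x) + W x * σ x) μ := by
  obtain ⟨K, hK⟩ := isCompact_Icc.exists_bound_of_continuousOn (hU.continuousOn (s := Icc 0 α))
  refine .add (.of_bound (hU.measurable.comp hσ).aestronglyMeasurable K
    (.of_forall fun x => hK _ (hσmem x))) (hW.mul_bdd hσ.aestronglyMeasurable (c := α) ?_)
  exact .of_forall fun x => by
    rw [Real.norm_eq_abs, abs_of_nonneg (hσmem x).1]; exact (hσmem x).2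

lemma integral_sub_integral_le_of_disjoint {E₁ E₀ : X → ℝ} {A B : Set X} {a b : ℝ}
    (h₁ : Integrable E₁ μ) (h₀ : Integrable E₀ μ) (hA : MeasurableSet A)
    (hB : MeasurableSet B) (hAB : Disjoint A B) (hEA : ∀ x ∈ A, E₁ x - E₀ x ≤ a)
    (hEB : ∀ x ∈ B, E₁ x - E₀ x ≤ b) (hE : ∀ x, x ∉ A → x ∉ B → E₁ x = E₀ x) :
    ∫ x, E₁ x ∂μ - ∫ x, E₀ x ∂μ ≤ a * μ.real A + b * μ.real B := by
  have hIA := (integrable_const (μ := μ) a).indicator hA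
  have hIB := (integrable_const (μ := μ) b).indicator hB
  have hle : ∀ x, E₁ x - E₀ x ≤ A.indicator (fun _ => a) x + B.indicator (fun _ => b) x :=
    fun x => by
      by_cases hxA : x ∈ A
      · simpa [hxA, Set.disjoint_left.mp hAB hxA] using hEA x hxA
      by_cases hxB : x ∈ B
      · simpa [hxA, hxB] using hEB x hxB
      · simp [hxA, hxB, hE x hxA hxB]
  rw [← integral_sub h₁ h₀]
  refine (integral_mono (h₁.sub h₀) (hIA.add hIB) hle).trans_eq ?_
  rw [integral_add' hIA hIB, integral_indicator_const _ hA, integral_indicator_const _ hB,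
    smul_eq_mul, smul_eq_mul, mul_comm, mul_comm (μ.real B)]

/-- The competitor `ρ + s 𝟙_A - t 𝟙_B` moves mass `s μ(A) = t μ(B)` from `B` to `A`. -/
theorem IsConstrainedLocalMin.exists_exchange_nonneg
    (hmin : IsConstrainedLocalMin μ α U W ρ) (hU : Continuous U) (hW : Integrable W μ)
    (hρ : Measurable ρ) (hρmem : ∀ x, ρ x ∈ Icc 0 α) :
    ∃ r : ℝ, 0 < r ∧ ∀ ⦃A B : Set X⦄ ⦃s t a b : ℝ⦄, MeasurableSet A → MeasurableSet B →
      Disjoint A B → 0 ≤ s → 0 ≤ t → s * μ.real A = t * μ.real B →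
      s * μ.real A + t * μ.real B < r →
      (∀ x ∈ A, ρ x + s ≤ α ∧ U (ρ x + s) - U (ρ x) + s * W x ≤ a) →
      (∀ x ∈ B, t ≤ ρ x ∧ U (ρ x - t) - U (ρ x) - t * W x ≤ b) →
      0 ≤ a * μ.real A + b * μ.real B := by
  obtain ⟨r, hr, hmin⟩ := hmin
  refine ⟨r, hr, fun A B s t a b hA hB hAB hs ht hmass hsmall hAbd hBbd => ?_⟩
  set φ : X → ℝ := fun x => A.indicator (fun _ => s) x - B.indicator (fun _ => t) x
  have hφA : ∀ x ∈ A, φ x = s := fun x hx => by simp [φ, hx, Set.disjoint_left.mp hAB hx]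
  have hφB : ∀ x ∈ B, φ x = -t := fun x hx => by simp [φ, hx, Set.disjoint_right.mp hAB hx]
  have hφ0 : ∀ x, x ∉ A → x ∉ B → φ x = 0 := fun x hxA hxB => by simp [φ, hxA, hxB]
  have hσmem : ∀ x, ρ x + φ x ∈ Icc 0 α := fun x => by
    by_cases hxA : x ∈ A
    · rw [hφA x hxA]; exact ⟨by linarith [(hρmem x).1], (hAbd x hxA).1⟩
    by_cases hxB : x ∈ B
    · rw [hφB x hxB]; exact ⟨by linarith [(hBbd x hxB).1], by linarith [(hρmem x).2]⟩
    · rw [hφ0 x hxA hxB, add_zero]; exact hρmem x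
  have hσ : Measurable fun x => ρ x + φ x :=
    hρ.add ((measurable_const.indicator hA).sub (measurable_const.indicator hB))
  have hIA := (integrable_const (μ := μ) s).indicator hA
  have hIB := (integrable_const (μ := μ) t).indicator hB
  have hρint : Integrable ρ μ := .of_mem_Icc 0 α hρ.aemeasurable (.of_forall hρmem)
  have hφint : Integrable φ μ := hIA.sub hIB
  have hσmass : ∫ x, ρ x + φ x ∂μ = ∫ x, ρ x ∂μ := by
    have hφ : ∫ x, φ x ∂μ = 0 := by
      rw [integral_sub hIA hIB, integral_indicator_const _ hA, integral_indicator_const _ hB,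
        smul_eq_mul, smul_eq_mul, mul_comm, hmass, mul_comm, sub_self]
    rw [integral_add hρint hφint, hφ, add_zero]
  have hσdist : ∫ x, |ρ x + φ x - ρ x| ∂μ = s * μ.real A + t * μ.real B := by
    simp_rw [add_sub_cancel_left, φ, abs_indicator_sub_indicator hAB hs ht]
    rw [integral_add hIA hIB, integral_indicator_const _ hA, integral_indicator_const _ hB,
      smul_eq_mul, smul_eq_mul, mul_comm, mul_comm (μ.real B)]
  have hE := hmin (fun x => ρ x + φ x) (hρint.add hφint) (.of_forall hσmem) hσmass (hσdist ▸ hsmall)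
  have hEσ := integrable_comp_add_mul_of_mem_Icc hU hW hσ hσmem
  have hEρ := integrable_comp_add_mul_of_mem_Icc hU hW hρ hρmem
  have hgain := integral_sub_integral_le_of_disjoint (a := a) (b := b) hEσ hEρ hA hB hAB
    (fun x hx => by simp only [hφA x hx]; linarith [(hAbd x hx).2])
    (fun x hx => by simp only [hφB x hx, ← sub_eq_add_neg]; linarith [(hBbd x hx).2])
    (fun x hxA hxB => by simp only [hφ0 x hxA hxB, add_zero])
  linarith

lemma measurable_slope_comp {f g : X → ℝ} (hU : Continuous U) (hf : Measurable f)
    (hg : Measurable g) : Measurable fun x => slope U (f x) (g x) := by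
  simp only [slope_def_field]
  exact ((hU.measurable.comp hg).sub (hU.measurable.comp hf)).div (hg.sub hf)

theorem IsConstrainedLocalMin.measure_slope_lt_eq_zero_or (hmin : IsConstrainedLocalMin μ α U W ρ)
    (hU : Continuous U) (hUc : ConvexOn ℝ (Icc 0 α) U) (hρ : Measurable ρ)
    (hρmem : ∀ x, ρ x ∈ Icc 0 α) (hW : Measurable W) (hWi : Integrable W μ)
    {h h' p q : ℝ} (hh : 0 < h) (hh' : 0 < h') (hpq : p < q) :
    μ {x | ρ x + h ≤ α ∧ slope U (ρ x) (ρ x + h) + W x < p} = 0 ∨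
      μ {x | h' ≤ ρ x ∧ q < slope U (ρ x - h') (ρ x) + W x} = 0 := by
  obtain ⟨r, hr, hex⟩ := hmin.exists_exchange_nonneg hU hWi hρ hρmem
  set A := {x | ρ x + h ≤ α ∧ slope U (ρ x) (ρ x + h) + W x < p}
  set B := {x | h' ≤ ρ x ∧ q < slope U (ρ x - h') (ρ x) + W x}
  by_contra! hAB0
  have hA : MeasurableSet A := (measurableSet_le (hρ.add_const h) measurable_const).inter
    (measurableSet_lt ((measurable_slope_comp hU hρ (hρ.add_const h)).add hW) measurable_const)
  have hB : MeasurableSet B := (measurableSet_le measurable_const hρ).inter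
    (measurableSet_lt measurable_const ((measurable_slope_comp hU (hρ.sub_const h') hρ).add hW))
  have ha : 0 < μ.real A := ENNReal.toReal_pos hAB0.1 (measure_ne_top μ A)
  have hb : 0 < μ.real B := ENNReal.toReal_pos hAB0.2 (measure_ne_top μ B)
  have hdisj : Disjoint A B := Set.disjoint_left.mpr fun x hxA hxB => by
    linarith [hxA.2, hxB.2, hUc.slope_sub_le_slope_add (hρmem x) hh hh' hxA.1 hxB.1]
  -- the mass moved: small enough for steps `s ≤ h`, `t ≤ h'` and `L¹` distance `2τ < r`
  set τ := min (h * μ.real A) (min (h' * μ.real B) (r / 4))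
  have hτ : 0 < τ := by positivity
  have hτr : τ ≤ r / 4 := (min_le_right _ _).trans (min_le_right _ _)
  set s := τ / μ.real A
  set t := τ / μ.real B
  have hs : s * μ.real A = τ := div_mul_cancel₀ τ ha.ne'
  have ht : t * μ.real B = τ := div_mul_cancel₀ τ hb.ne'
  have hsh : s ≤ h := (div_le_iff₀ ha).mpr (min_le_left _ _)
  have hth : t ≤ h' := (div_le_iff₀ hb).mpr ((min_le_right _ _).trans (min_le_left _ _))
  have hspos : 0 < s := by positivity
  have htpos : 0 < t := by positivity
  have key := hex hA hB hdisj hspos.le htpos.le (hs.trans ht.symm)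
    (by rw [hs, ht]; linarith [hτr])
    (a := s * p) (b := -(t * q))
    (fun x hx => ⟨by linarith [hx.1], by
      nlinarith [hx.2, hUc.sub_le_mul_slope_add (hρmem x) hspos hsh hx.1]⟩)
    (fun x hx => ⟨by linarith [hx.1], by
      nlinarith [hx.2, hUc.mul_slope_sub_le_sub (hρmem x) htpos hth hx.1]⟩)
  have hgain : s * p * μ.real A + -(t * q) * μ.real B = τ * (p - q) := by
    linear_combination p * hs - q * ht
  nlinarith

theorem IsConstrainedLocalMin.exists_lagrange_multiplier (hmin : IsConstrainedLocalMin μ α U W ρ)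
    (hU : Continuous U) (hUc : ConvexOn ℝ (Icc 0 α) U) (hρ : Measurable ρ)
    (hρmem : ∀ x, ρ x ∈ Icc 0 α) (hW : Measurable W) (hWi : Integrable W μ)
    (hpos : 0 < ∫ x, ρ x ∂μ) (hlt : ∫ x, ρ x ∂μ < α * μ.real univ) :
    ∃ C : ℝ, ∀ᵐ x ∂μ,
      (∀ n : ℕ, ρ x + 1 / ((n : ℝ) + 1) ≤ α →
        C ≤ slope U (ρ x) (ρ x + 1 / ((n : ℝ) + 1)) + W x) ∧
      (∀ n : ℕ, 1 / ((n : ℝ) + 1) ≤ ρ x →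
        slope U (ρ x - 1 / ((n : ℝ) + 1)) (ρ x) + W x ≤ C) := by
  have hρint : Integrable ρ μ := .of_mem_Icc 0 α hρ.aemeasurable (.of_forall hρmem)
  have hA : ∃ n : ℕ, μ {x | ρ x + 1 / ((n : ℝ) + 1) ≤ α} ≠ 0 := by
    have hgap : 0 < ∫ x, (α - ρ x) ∂μ := by
      rw [integral_sub (integrable_const α) hρint, integral_const, smul_eq_mul, mul_comm]
      linarith
    simpa only [le_sub_iff_add_le'] using exists_measure_one_div_le_ne_zero hgap
  exact exists_ae_separating_const _ _ _ _ (fun n m p q hpq =>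
    hmin.measure_slope_lt_eq_zero_or hU hUc hρ hρmem hW hWi (by positivity) (by positivity) hpq)
    hA (exists_measure_one_div_le_ne_zero hpos)

end ConstrainedLocalMin

section Pointwise

variable {α y c u : ℝ} {U U' g : ℝ → ℝ} {ζl ζh : EReal}

lemma tendsto_add_mul_one_div_nhdsNE (y : ℝ) {σ : ℝ} (hσ : σ ≠ 0) :
    Tendsto (fun n : ℕ => y + σ * (1 / ((n : ℝ) + 1))) atTop (𝓝[≠] y) := by
  refine tendsto_nhdsWithin_iff.mpr ⟨?_, .of_forall fun n => by simp [hσ]; positivity⟩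
  simpa using tendsto_const_nhds.add (tendsto_one_div_add_atTop_nhds_zero_nat.const_mul σ)

lemma HasDerivAt.le_of_forall_le_slope_right (hd : HasDerivAt U u y)
    (h : ∀ᶠ n : ℕ in atTop, c ≤ slope U y (y + 1 / ((n : ℝ) + 1))) : c ≤ u := by
  refine ge_of_tendsto ((hasDerivAt_iff_tendsto_slope.mp hd).comp
    (tendsto_add_mul_one_div_nhdsNE y one_ne_zero)) (h.mono fun n hn => ?_)
  simpa using hn

lemma HasDerivAt.le_of_forall_slope_left_le (hd : HasDerivAt U u y)
    (h : ∀ᶠ n : ℕ in atTop, slope U (y - 1 / ((n : ℝ) + 1)) y ≤ c) : u ≤ c := by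
  refine le_of_tendsto ((hasDerivAt_iff_tendsto_slope.mp hd).comp
    (tendsto_add_mul_one_div_nhdsNE y (neg_ne_zero.mpr one_ne_zero))) (h.mono fun n hn => ?_)
  simpa [slope_comm U y, ← sub_eq_add_neg] using hn

lemma MonotoneOn.le_of_tendsto_nhdsGT {f : ℝ → ℝ} {a b t : ℝ} {l : EReal}
    (hf : MonotoneOn f (Ioo a b)) (hl : Tendsto (fun s => (f s : EReal)) (𝓝[>] a) (𝓝 l))
    (ht : t ∈ Ioo a b) : l ≤ f t :=
  le_of_tendsto hl <| Filter.mem_of_superset (Ioo_mem_nhdsGT ht.1) fun _ hs =>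
    EReal.coe_le_coe_iff.mpr (hf ⟨hs.1, hs.2.trans ht.2⟩ ht hs.2.le)

lemma MonotoneOn.le_of_tendsto_nhdsLT {f : ℝ → ℝ} {a b t : ℝ} {l : EReal}
    (hf : MonotoneOn f (Ioo a b)) (hl : Tendsto (fun s => (f s : EReal)) (𝓝[<] b) (𝓝 l))
    (ht : t ∈ Ioo a b) : f t ≤ l :=
  ge_of_tendsto hl <| Filter.mem_of_superset (Ioo_mem_nhdsLT ht.2) fun _ hs =>
    EReal.coe_le_coe_iff.mpr (hf ht ⟨ht.1.trans hs.1, hs.2⟩ hs.1.le)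

lemma coe_le_of_forall_le_slope_left_end (hα : 0 < α) (hUc : ConvexOn ℝ (Icc 0 α) U)
    (hU' : ∀ s ∈ Ioo 0 α, HasDerivAt U (U' s) s)
    (hζl : Tendsto (fun s => (U' s : EReal)) (𝓝[>] 0) (𝓝 ζl))
    (h : ∀ᶠ n : ℕ in atTop, c ≤ slope U 0 (1 / ((n : ℝ) + 1))) : (c : EReal) ≤ ζl := by
  have hlim := tendsto_nhdsWithin_iff.mpr ⟨tendsto_one_div_add_atTop_nhds_zero_nat (𝕜 := ℝ),
    .of_forall fun n => show (0 : ℝ) < 1 / ((n : ℝ) + 1) by positivity⟩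
  refine ge_of_tendsto (hζl.comp hlim) ?_
  filter_upwards [h, tendsto_one_div_add_atTop_nhds_zero_nat.eventually (gt_mem_nhds hα)]
    with n hn hnα
  have hpos : (0 : ℝ) < 1 / ((n : ℝ) + 1) := by positivity
  exact EReal.coe_le_coe_iff.mpr (hn.trans (hUc.slope_le_of_hasDerivAt
    (left_mem_Icc.mpr hα.le) ⟨hpos.le, hnα.le⟩ hpos (hU' _ ⟨hpos, hnα⟩)))

lemma le_coe_of_forall_slope_le_right_end (hα : 0 < α) (hUc : ConvexOn ℝ (Icc 0 α) U)
    (hU' : ∀ s ∈ Ioo 0 α, HasDerivAt U (U' s) s)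
    (hζh : Tendsto (fun s => (U' s : EReal)) (𝓝[<] α) (𝓝 ζh))
    (h : ∀ᶠ n : ℕ in atTop, slope U (α - 1 / ((n : ℝ) + 1)) α ≤ c) : ζh ≤ (c : EReal) := by
  have hlim : Tendsto (fun n : ℕ => α - 1 / ((n : ℝ) + 1)) atTop (𝓝[<] α) :=
    tendsto_nhdsWithin_iff.mpr ⟨by
      simpa using tendsto_const_nhds.sub (tendsto_one_div_add_atTop_nhds_zero_nat (𝕜 := ℝ)),
      .of_forall fun n => show α - 1 / ((n : ℝ) + 1) < α by
        linarith [show (0 : ℝ) < 1 / ((n : ℝ) + 1) by positivity]⟩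
  refine le_of_tendsto (hζh.comp hlim) ?_
  filter_upwards [h, tendsto_one_div_add_atTop_nhds_zero_nat.eventually (gt_mem_nhds hα)]
    with n hn hnα
  have hpos : (0 : ℝ) < 1 / ((n : ℝ) + 1) := by positivity
  exact EReal.coe_le_coe_iff.mpr ((hUc.le_slope_of_hasDerivAt
    ⟨by linarith, by linarith⟩ (right_mem_Icc.mpr hα.le) (by linarith)
    (hU' _ ⟨by linarith, by linarith⟩)).trans hn)

theorem eq_of_forall_slope_bounds (hα : 0 < α) (hUc : ConvexOn ℝ (Icc 0 α) U)
    (hU' : ∀ s ∈ Ioo 0 α, HasDerivAt U (U' s) s) (hmono : StrictMonoOn U' (Ioo 0 α))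
    (hζl : Tendsto (fun s => (U' s : EReal)) (𝓝[>] 0) (𝓝 ζl))
    (hζh : Tendsto (fun s => (U' s : EReal)) (𝓝[<] α) (𝓝 ζh))
    (hg_low : ∀ ζ : ℝ, (ζ : EReal) ≤ ζl → g ζ = 0)
    (hg_high : ∀ ζ : ℝ, ζh ≤ (ζ : EReal) → g ζ = α)
    (hg_mid : ∀ ζ : ℝ, ζl < (ζ : EReal) → (ζ : EReal) < ζh → g ζ ∈ Ioo 0 α ∧ U' (g ζ) = ζ)
    (hy : y ∈ Icc 0 α)
    (hr : ∀ n : ℕ, y + 1 / ((n : ℝ) + 1) ≤ α → c ≤ slope U y (y + 1 / ((n : ℝ) + 1)))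
    (hl : ∀ n : ℕ, 1 / ((n : ℝ) + 1) ≤ y → slope U (y - 1 / ((n : ℝ) + 1)) y ≤ c) :
    y = g c := by
  have hsmall : ∀ ε > 0, ∀ᶠ n : ℕ in atTop, 1 / ((n : ℝ) + 1) ≤ ε := fun ε hε =>
    tendsto_one_div_add_atTop_nhds_zero_nat.eventually (ge_mem_nhds hε)
  obtain rfl | hy0 := hy.1.eq_or_lt
  · refine (hg_low c (coe_le_of_forall_le_slope_left_end hα hUc hU' hζl ?_)).symm
    exact (hsmall α hα).mono fun n hn => by simpa using hr n (by simpa using hn)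
  obtain rfl | hyα := hy.2.eq_or_lt
  · refine (hg_high c (le_coe_of_forall_slope_le_right_end hα hUc hU' hζh ?_)).symm
    exact (hsmall y hα).mono hl
  have hd := hU' y ⟨hy0, hyα⟩
  have hc : U' y = c := le_antisymm (hd.le_of_forall_slope_left_le ((hsmall y hy0).mono hl))
    (hd.le_of_forall_le_slope_right ((hsmall (α - y) (by linarith)).mono fun n hn =>
      hr n (by linarith)))
  have hlow : ζl < (c : EReal) := by
    refine (hmono.monotoneOn.le_of_tendsto_nhdsGT hζl ⟨half_pos hy0, by linarith⟩).trans_lt ?_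
    exact hc ▸ EReal.coe_lt_coe_iff.mpr
      (hmono ⟨half_pos hy0, by linarith⟩ ⟨hy0, hyα⟩ (half_lt_self hy0))
  have hhigh : (c : EReal) < ζh := by
    refine lt_of_lt_of_le ?_ (hmono.monotoneOn.le_of_tendsto_nhdsLT hζh
      (t := (y + α) / 2) ⟨by linarith, by linarith⟩)
    exact hc ▸ EReal.coe_lt_coe_iff.mpr (hmono ⟨hy0, hyα⟩ ⟨by linarith, by linarith⟩ (by linarith))
  obtain ⟨hgmem, hgc⟩ := hg_mid c hlow hhigh
  exact hmono.injOn ⟨hy0, hyα⟩ hgmem (hc.trans hgc.symm)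

end Pointwise

section Representatives

lemma ContinuousOn.exists_continuous_eqOn_Icc {a b : ℝ} {f : ℝ → ℝ}
    (hf : ContinuousOn f (Icc a b)) (hab : a ≤ b) :
    ∃ f' : ℝ → ℝ, Continuous f' ∧ EqOn f' f (Icc a b) :=
  ⟨IccExtend hab ((Icc a b).domRestrict f),
    continuous_IccExtend_iff.mpr (continuousOn_iff_continuous_domRestrict.mp hf),
    fun _ hx => IccExtend_of_mem hab _ hx⟩

lemma AEMeasurable.exists_measurable_mem_Icc_ae_eq {X : Type*} [MeasurableSpace X]
    {μ : Measure X} {f : X → ℝ} {a b : ℝ} (hf : AEMeasurable f μ) (hab : a ≤ b)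
    (hmem : ∀ᵐ x ∂μ, f x ∈ Icc a b) :
    ∃ f' : X → ℝ, Measurable f' ∧ (∀ x, f' x ∈ Icc a b) ∧ f' =ᵐ[μ] f := by
  refine ⟨fun x => projIcc a b hab (hf.mk f x),
    (continuous_subtype_val.comp continuous_projIcc).measurable.comp hf.measurable_mk,
    fun x => (projIcc a b hab _).2, ?_⟩
  filter_upwards [hf.ae_eq_mk, hmem] with x hx hxm
  rw [← hx, projIcc_of_mem hab hxm]

end Representatives

theorem local_minimiser_explicit_form_general
    (d : ℕ) (Ω : Set (EuclideanSpace ℝ (Fin d)))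
    (hΩ_meas : MeasurableSet Ω)
    (hΩ_bdd : Bornology.IsBounded Ω)
    (α : ℝ) (hα : 0 < α)
    (U : ℝ → ℝ) (hU_cont : ContinuousOn U (Icc 0 α)) (hU_conv : ConvexOn ℝ (Icc 0 α) U)
    (V : EuclideanSpace ℝ (Fin d) → ℝ) (hV_cont : ContinuousOn V Ω)
    (hV_bdd : ∃ B : ℝ, ∀ x ∈ Ω, V x ≤ B) (hV_nonneg : ∀ x ∈ Ω, 0 ≤ V x)
    (U' : ℝ → ℝ)
    (hU'_deriv : ∀ s ∈ Ioo 0 α, HasDerivAt U (U' s) s)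
    (hU'_smono : StrictMonoOn U' (Ioo 0 α))
    (ζl ζh : EReal)
    (hζl_lim : Tendsto (fun s : ℝ => (U' s : EReal)) (𝓝[>] (0:ℝ)) (𝓝 ζl))
    (hζh_lim : Tendsto (fun s : ℝ => (U' s : EReal)) (𝓝[<] α) (𝓝 ζh))
    (g : ℝ → ℝ)
    (hg_low : ∀ ζ : ℝ, (ζ : EReal) ≤ ζl → g ζ = 0)
    (hg_high : ∀ ζ : ℝ, ζh ≤ (ζ : EReal) → g ζ = α)
    (hg_mid : ∀ ζ : ℝ, ζl < (ζ : EReal) → (ζ : EReal) < ζh →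
      g ζ ∈ Ioo 0 α ∧ U' (g ζ) = ζ)
    (M : ℝ) (hM_pos : 0 < M) (hM_lt : M < α * (volume Ω).toReal)
    (ρh : EuclideanSpace ℝ (Fin d) → ℝ)
    (hρh_int : Integrable ρh (volume.restrict Ω))
    (hρh_mem : ∀ᵐ x ∂(volume.restrict Ω), ρh x ∈ Icc 0 α)
    (hρh_mass : ∫ x in Ω, ρh x = M)
    (hρh_locmin : ∃ r : ℝ, 0 < r ∧
      ∀ ρ : EuclideanSpace ℝ (Fin d) → ℝ,
        Integrable ρ (volume.restrict Ω) →
        (∀ᵐ x ∂(volume.restrict Ω), ρ x ∈ Icc 0 α) →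
        (∫ x in Ω, ρ x) = M →
        (∫ x in Ω, |ρ x - ρh x|) < r →
        ∫ x in Ω, (U (ρh x) + V x * ρh x) ≤ ∫ x in Ω, (U (ρ x) + V x * ρ x)) :
    ∃ C : ℝ, ∀ᵐ x ∂(volume.restrict Ω), ρh x = g (C - V x) := by
  obtain ⟨Ũ, hŨ, hŨU⟩ := hU_cont.exists_continuous_eqOn_Icc hα.le
  have hŨc : ConvexOn ℝ (Icc 0 α) Ũ := hU_conv.congr hŨU.symm
  have hŨ' : ∀ s ∈ Ioo 0 α, HasDerivAt Ũ (U' s) s := fun s hs =>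
    (hU'_deriv s hs).congr_of_eventuallyEq <| eventuallyEq_of_mem (Ioo_mem_nhds hs.1 hs.2)
      fun y hy => hŨU (Ioo_subset_Icc_self hy)
  have : IsFiniteMeasure (volume.restrict Ω) :=
    isFiniteMeasure_restrict.mpr hΩ_bdd.measure_lt_top.ne
  obtain ⟨ρ, hρ, hρmem, hρρh⟩ :=
    hρh_int.aemeasurable.exists_measurable_mem_Icc_ae_eq hα.le hρh_mem
  have hVm := hV_cont.aemeasurable (μ := volume) hΩ_meas
  obtain ⟨B, hB⟩ := hV_bdd
  have hVi : Integrable V (volume.restrict Ω) := .of_mem_Icc 0 B hVm <|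
    ae_restrict_of_forall_mem hΩ_meas fun x hx => ⟨hV_nonneg x hx, hB x hx⟩
  have hmin : IsConstrainedLocalMin (volume.restrict Ω) α Ũ (hVm.mk V) ρ := by
    refine IsConstrainedLocalMin.congr ?_ hρh_mem hρρh hVm.ae_eq_mk.symm hŨU
    rw [IsConstrainedLocalMin, hρh_mass]
    exact hρh_locmin
  have hmass : ∫ x in Ω, ρ x = M := (integral_congr_ae hρρh).trans hρh_mass
  obtain ⟨C, hC⟩ := hmin.exists_lagrange_multiplier hŨ hŨc hρ hρmem hVm.measurable_mk
    (hVi.congr hVm.ae_eq_mk) (hmass ▸ hM_pos) (by rwa [hmass, measureReal_restrict_apply_univ])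
  refine ⟨C, ?_⟩
  filter_upwards [hC, hρρh, hVm.ae_eq_mk] with x ⟨hr, hl⟩ hρx hVx
  rw [← hρx, hVx]
  exact eq_of_forall_slope_bounds hα hŨc hŨ' hU'_smono hζl_lim hζh_lim hg_low hg_high hg_mid
    (hρmem x) (fun n hn => by linarith [hr n hn]) (fun n hn => by linarith [hl n hn])

/-- When U′ is strictly increasing, every L¹-local minimiser of the free energy on 𝒜_M
is of the form ρ̂(x) = T_{0,α}∘(U′)⁻¹(C − V(x)). -/
theorem local_minimiser_explicit_form
    (d : ℕ) (Ω : Set (EuclideanSpace ℝ (Fin d)))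
    (hΩ_meas : MeasurableSet Ω) (hΩ_ne : Ω.Nonempty) (hΩ_open : IsOpen Ω)
    (hΩ_conn : IsConnected Ω) (hΩ_bdd : Bornology.IsBounded Ω)
    (α : ℝ) (hα : 0 < α)
    (U : ℝ → ℝ) (hU_cont : ContinuousOn U (Icc 0 α)) (hU_conv : ConvexOn ℝ (Icc 0 α) U)
    (V : EuclideanSpace ℝ (Fin d) → ℝ) (hV_cont : ContinuousOn V Ω)
    (hV_bdd : ∃ B : ℝ, ∀ x ∈ Ω, V x ≤ B) (hV_nonneg : ∀ x ∈ Ω, 0 ≤ V x)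
    (U' : ℝ → ℝ)
    (hU'_deriv : ∀ s ∈ Ioo 0 α, HasDerivAt U (U' s) s)
    (hU'_cont : ContinuousOn U' (Ioo 0 α))
    (hU'_smono : StrictMonoOn U' (Ioo 0 α))
    (ζl ζh : EReal) (hζl_ne : ζl ≠ ⊤) (hζh_ne : ζh ≠ ⊥)
    (hζl_lim : Tendsto (fun s : ℝ => (U' s : EReal)) (𝓝[>] (0:ℝ)) (𝓝 ζl))
    (hζh_lim : Tendsto (fun s : ℝ => (U' s : EReal)) (𝓝[<] α) (𝓝 ζh))
    (g : ℝ → ℝ)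
    (hg_low : ∀ ζ : ℝ, (ζ : EReal) ≤ ζl → g ζ = 0)
    (hg_high : ∀ ζ : ℝ, ζh ≤ (ζ : EReal) → g ζ = α)
    (hg_mid : ∀ ζ : ℝ, ζl < (ζ : EReal) → (ζ : EReal) < ζh →
      g ζ ∈ Ioo 0 α ∧ U' (g ζ) = ζ)
    (M : ℝ) (hM_pos : 0 < M) (hM_lt : M < α * (volume Ω).toReal)
    (ρh : EuclideanSpace ℝ (Fin d) → ℝ)
    (hρh_int : Integrable ρh (volume.restrict Ω))
    (hρh_mem : ∀ᵐ x ∂(volume.restrict Ω), ρh x ∈ Icc 0 α)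
    (hρh_mass : ∫ x in Ω, ρh x = M)
    (hρh_locmin : ∃ r : ℝ, 0 < r ∧
      ∀ ρ : EuclideanSpace ℝ (Fin d) → ℝ,
        Integrable ρ (volume.restrict Ω) →
        (∀ᵐ x ∂(volume.restrict Ω), ρ x ∈ Icc 0 α) →
        (∫ x in Ω, ρ x) = M →
        (∫ x in Ω, |ρ x - ρh x|) < r →
        ∫ x in Ω, (U (ρh x) + V x * ρh x) ≤ ∫ x in Ω, (U (ρ x) + V x * ρ x)) :
    ∃ C : ℝ, ∀ᵐ x ∂(volume.restrict Ω), ρh x = g (C - V x) :=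
  local_minimiser_explicit_form_general d Ω hΩ_meas hΩ_bdd α hα U hU_cont hU_conv V hV_cont hV_bdd
    hV_nonneg U' hU'_deriv hU'_smono ζl ζh hζl_lim hζh_lim g hg_low hg_high hg_mid M hM_pos hM_lt ρh
    hρh_int hρh_mem hρh_mass hρh_locmin
end

section
/- Assume U′ is strictly increasing on (0,α), let M ∈ (0, α|Ω|), let C₀ be the unique constant with ∫_Ω g(C₀ − V(x)) dx = M, and set ρ̂⁰(x) = g(C₀ − V(x)). Then ρ̂⁰ ∈ 𝒜_M, ρ̂⁰ is a global minimiser of ℱ on 𝒜_M (that is, ℱ[ρ̂⁰] ≤ ℱ[ρ] for all ρ ∈ 𝒜_M), and ρ̂⁰ is the unique L¹-local minimiser of ℱ on 𝒜_M: every L¹-local minimiser of ℱ on 𝒜_M coincides with ρ̂⁰ a.e. in Ω. -/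
/-!
For a multiplier `ζ`, the value `g ζ` is the unique minimiser on `[0, α]` of the Lagrangian
`s ↦ U s - ζ s`, whose derivative `U' - ζ` changes sign exactly at `g ζ`. As every admissible
density has mass `M`, `ℱ[ρ] = ∫ (U ρ - (C₀ - V) ρ) + C₀ M`, so `ρ̂⁰ = g (C₀ - V)` minimises the
integrand pointwise, strictly. An `L¹`-local minimiser is global because `ℱ` is convex on the
convex set `𝒜_M`; it therefore has the energy of `ρ̂⁰`, and strictness forces it to equal `ρ̂⁰` a.e.
-/

open Set MeasureTheory Filter Topology

theorem StrictMonoOn.lt_of_tendsto_nhdsGT {β : Type*} [LinearOrder β] [TopologicalSpace β]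
    [OrderClosedTopology β] {f : ℝ → β} {a b t : ℝ} {l : β} (hf : StrictMonoOn f (Ioo a b))
    (hl : Tendsto f (𝓝[>] a) (𝓝 l)) (ht : t ∈ Ioo a b) : l < f t := by
  obtain ⟨m, ham, hmt⟩ := exists_between ht.1
  have hm : m ∈ Ioo a b := ⟨ham, hmt.trans ht.2⟩
  refine (le_of_tendsto hl ?_).trans_lt (hf hm ht hmt)
  filter_upwards [Ioo_mem_nhdsGT ham] with s hs
  exact (hf ⟨hs.1, hs.2.trans hm.2⟩ hm hs.2).le

theorem StrictMonoOn.lt_of_tendsto_nhdsLT {β : Type*} [LinearOrder β] [TopologicalSpace β]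
    [OrderClosedTopology β] {f : ℝ → β} {a b t : ℝ} {l : β} (hf : StrictMonoOn f (Ioo a b))
    (hl : Tendsto f (𝓝[<] b) (𝓝 l)) (ht : t ∈ Ioo a b) : f t < l := by
  obtain ⟨m, htm, hmb⟩ := exists_between ht.2
  have hm : m ∈ Ioo a b := ⟨ht.1.trans htm, hmb⟩
  refine (hf ht hm htm).trans_le (ge_of_tendsto hl ?_)
  filter_upwards [Ioo_mem_nhdsLT hmb] with s hs
  exact (hf hm ⟨hm.1.trans hs.1, hs.2⟩ hs.1).le

section Lagrangian

variable {U U' : ℝ → ℝ} {a b ζ : ℝ}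

theorem strictMonoOn_sub_mul_of_lt_deriv (hU : ContinuousOn U (Icc a b))
    (hU' : ∀ s ∈ Ioo a b, HasDerivAt U (U' s) s) (hζ : ∀ s ∈ Ioo a b, ζ < U' s) :
    StrictMonoOn (fun s => U s - ζ * s) (Icc a b) := by
  refine strictMonoOn_of_deriv_pos (convex_Icc a b)
    (hU.sub (continuousOn_const.mul continuousOn_id)) fun s hs => ?_
  rw [interior_Icc] at hs
  have hderiv : HasDerivAt (fun s => U s - ζ * s) (U' s - ζ) s := by
    simpa using (hU' s hs).fun_sub ((hasDerivAt_id' s).const_mul ζ)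
  rw [hderiv.deriv, sub_pos]
  exact hζ s hs

theorem strictAntiOn_sub_mul_of_deriv_lt (hU : ContinuousOn U (Icc a b))
    (hU' : ∀ s ∈ Ioo a b, HasDerivAt U (U' s) s) (hζ : ∀ s ∈ Ioo a b, U' s < ζ) :
    StrictAntiOn (fun s => U s - ζ * s) (Icc a b) := by
  refine strictAntiOn_of_deriv_neg (convex_Icc a b)
    (hU.sub (continuousOn_const.mul continuousOn_id)) fun s hs => ?_
  rw [interior_Icc] at hs
  have hderiv : HasDerivAt (fun s => U s - ζ * s) (U' s - ζ) s := by
    simpa using (hU' s hs).fun_sub ((hasDerivAt_id' s).const_mul ζ)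
  rw [hderiv.deriv, sub_neg]
  exact hζ s hs

end Lagrangian

-- `g = T_{a,b} ∘ f⁻¹`: the inverse of `f` on `(a, b)`, truncated to `a` below `ζl` and to `b`
-- above `ζh`.
structure IsTruncatedInverse (f : ℝ → ℝ) (a b : ℝ) (ζl ζh : EReal) (g : ℝ → ℝ) : Prop where
  eq_left : ∀ ζ : ℝ, (ζ : EReal) ≤ ζl → g ζ = a
  eq_right : ∀ ζ : ℝ, ζh ≤ (ζ : EReal) → g ζ = b
  mem_Ioo : ∀ ζ : ℝ, ζl < (ζ : EReal) → (ζ : EReal) < ζh → g ζ ∈ Ioo a b ∧ f (g ζ) = ζ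

namespace IsTruncatedInverse

variable {U U' g : ℝ → ℝ} {a b : ℝ} {ζl ζh : EReal}

theorem mem_Icc (hg : IsTruncatedInverse U' a b ζl ζh g) (hab : a ≤ b) (ζ : ℝ) :
    g ζ ∈ Icc a b := by
  rcases le_or_gt (ζ : EReal) ζl with hl | hl
  · rw [hg.eq_left ζ hl]; exact left_mem_Icc.2 hab
  rcases le_or_gt ζh (ζ : EReal) with hh | hh
  · rw [hg.eq_right ζ hh]; exact right_mem_Icc.2 hab
  · exact Ioo_subset_Icc_self (hg.mem_Ioo ζ hl hh).1

theorem sub_mul_lt (hg : IsTruncatedInverse U' a b ζl ζh g) (hU : ContinuousOn U (Icc a b))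
    (hU' : ∀ s ∈ Ioo a b, HasDerivAt U (U' s) s) (hU'_mono : StrictMonoOn U' (Ioo a b))
    (hζl : Tendsto (fun s => (U' s : EReal)) (𝓝[>] a) (𝓝 ζl))
    (hζh : Tendsto (fun s => (U' s : EReal)) (𝓝[<] b) (𝓝 ζh))
    (ζ s : ℝ) (hs : s ∈ Icc a b) (hne : s ≠ g ζ) : U (g ζ) - ζ * g ζ < U s - ζ * s := by
  have hU'E : StrictMonoOn (fun s => (U' s : EReal)) (Ioo a b) :=
    EReal.coe_strictMono.comp_strictMonoOn hU'_mono
  rcases le_or_gt (ζ : EReal) ζl with hζ | hζl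
  · rw [hg.eq_left ζ hζ] at hne ⊢
    have has : a < s := hs.1.lt_of_ne (Ne.symm hne)
    refine strictMonoOn_sub_mul_of_lt_deriv hU hU' (fun t ht => ?_)
      (left_mem_Icc.2 (has.le.trans hs.2)) hs has
    exact_mod_cast hζ.trans_lt (hU'E.lt_of_tendsto_nhdsGT hζl ht)
  rcases le_or_gt ζh (ζ : EReal) with hζ | hζh
  · rw [hg.eq_right ζ hζ] at hne ⊢
    have hsb : s < b := hs.2.lt_of_ne hne
    refine strictAntiOn_sub_mul_of_deriv_lt hU hU' (fun t ht => ?_)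
      hs (right_mem_Icc.2 (hs.1.trans hsb.le)) hsb
    exact_mod_cast (hU'E.lt_of_tendsto_nhdsLT hζh ht).trans_le hζ
  obtain ⟨hgI, hgζ⟩ := hg.mem_Ioo ζ hζl hζh
  rcases hne.lt_or_gt with hlt | hgt
  · refine strictAntiOn_sub_mul_of_deriv_lt (hU.mono (Icc_subset_Icc_right hgI.2.le))
      (fun t ht => hU' t ⟨ht.1, ht.2.trans hgI.2⟩) (fun t ht => ?_)
      ⟨hs.1, hlt.le⟩ (right_mem_Icc.2 hgI.1.le) hlt
    exact hgζ ▸ hU'_mono ⟨ht.1, ht.2.trans hgI.2⟩ hgI ht.2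
  · refine strictMonoOn_sub_mul_of_lt_deriv (hU.mono (Icc_subset_Icc_left hgI.1.le))
      (fun t ht => hU' t ⟨hgI.1.trans ht.1, ht.2⟩) (fun t ht => ?_)
      (left_mem_Icc.2 hgI.2.le) ⟨hgt.le, hs.2⟩ hgt
    exact hgζ ▸ hU'_mono hgI ⟨hgI.1.trans ht.1, ht.2⟩ ht.1

end IsTruncatedInverse

theorem monotone_of_forall_sub_mul_lt {U g : ℝ → ℝ} {S : Set ℝ} (hgS : ∀ ζ, g ζ ∈ S)
    (hg : ∀ ζ, ∀ s ∈ S, s ≠ g ζ → U (g ζ) - ζ * g ζ < U s - ζ * s) : Monotone g := by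
  intro ζ η hζη
  by_contra! hlt
  have h₁ := hg ζ (g η) (hgS η) hlt.ne
  have h₂ := hg η (g ζ) (hgS ζ) hlt.ne'
  nlinarith

theorem ConvexOn.le_of_eventually_le_segment {E : Type*} [AddCommGroup E] [Module ℝ E]
    {s : Set E} {f : E → ℝ} (hf : ConvexOn ℝ s f) {x y : E} (hx : x ∈ s) (hy : y ∈ s)
    (h : ∀ᶠ t in 𝓝[>] (0 : ℝ), f x ≤ f ((1 - t) • x + t • y)) : f x ≤ f y := by
  obtain ⟨t, hxt, ht⟩ := (h.and (Ioo_mem_nhdsGT one_pos)).exists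
  have hseg := hf.2 hx hy (sub_nonneg.2 ht.2.le) ht.1.le (sub_add_cancel 1 t)
  simp only [smul_eq_mul] at hseg
  exact le_of_mul_le_mul_left (by linarith) ht.1

theorem integrable_comp_of_ae_mem_Icc {X : Type*} [MeasurableSpace X] {μ : Measure X}
    [IsFiniteMeasure μ] {f : ℝ → ℝ} {ρ : X → ℝ} {a b : ℝ} (hab : a ≤ b)
    (hf : ContinuousOn f (Icc a b)) (hρ : AEStronglyMeasurable ρ μ)
    (hρab : ∀ᵐ x ∂μ, ρ x ∈ Icc a b) : Integrable (fun x => f (ρ x)) μ := by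
  obtain ⟨K, hK⟩ := isCompact_Icc.exists_bound_of_continuousOn hf
  have hext : (fun x => IccExtend hab ((Icc a b).domRestrict f) (ρ x)) =ᵐ[μ] fun x => f (ρ x) := by
    filter_upwards [hρab] with x hx
    rw [IccExtend_of_mem _ _ hx, domRestrict_apply]
  refine Integrable.congr (Integrable.of_bound ?_ K ?_) hext
  · exact hf.domRestrict.Icc_extend'.comp_aestronglyMeasurable hρ
  · filter_upwards [hρab] with x hx
    rw [IccExtend_of_mem _ _ hx, domRestrict_apply]
    exact hK _ hx

section FreeEnergy

variable {X : Type*} [MeasurableSpace X] {μ : Measure X} {U : ℝ → ℝ} {V : X → ℝ} {α M : ℝ}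

def admissibleDensities (μ : Measure X) (α M : ℝ) : Set (X → ℝ) :=
  {ρ | Integrable ρ μ ∧ (∀ᵐ x ∂μ, ρ x ∈ Icc 0 α) ∧ ∫ x, ρ x ∂μ = M}

noncomputable def freeEnergy (μ : Measure X) (U : ℝ → ℝ) (V : X → ℝ) (ρ : X → ℝ) : ℝ :=
  ∫ x, (U (ρ x) + V x * ρ x) ∂μ

theorem convex_admissibleDensities : Convex ℝ (admissibleDensities μ α M) := by
  intro ρ hρ σ hσ a b ha hb hab
  refine ⟨(hρ.1.smul a).add (hσ.1.smul b), ?_, ?_⟩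
  · filter_upwards [hρ.2.1, hσ.2.1] with x hx hy
    exact convex_Icc 0 α hx hy ha hb hab
  · simp only [Pi.add_apply, Pi.smul_apply, smul_eq_mul]
    rw [integral_add (hρ.1.const_mul a) (hσ.1.const_mul b), integral_const_mul,
      integral_const_mul, hρ.2.2, hσ.2.2, ← add_mul, hab, one_mul]

theorem integrable_energyDensity [IsFiniteMeasure μ] (hα : 0 ≤ α)
    (hU : ContinuousOn U (Icc 0 α)) (hV : AEStronglyMeasurable V μ) {B : ℝ}
    (hVB : ∀ᵐ x ∂μ, ‖V x‖ ≤ B) {ρ : X → ℝ} (hρ : ρ ∈ admissibleDensities μ α M) :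
    Integrable (fun x => U (ρ x) + V x * ρ x) μ :=
  (integrable_comp_of_ae_mem_Icc hα hU hρ.1.aestronglyMeasurable hρ.2.1).add
    (hρ.1.bdd_mul hV hVB)

theorem convexOn_freeEnergy (hU : ConvexOn ℝ (Icc 0 α) U)
    (hE : ∀ ρ ∈ admissibleDensities μ α M, Integrable (fun x => U (ρ x) + V x * ρ x) μ) :
    ConvexOn ℝ (admissibleDensities μ α M) (freeEnergy μ U V) := by
  refine ⟨convex_admissibleDensities, fun ρ hρ σ hσ a b ha hb hab => ?_⟩
  have hEρ := (hE ρ hρ).const_mul a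
  have hEσ := (hE σ hσ).const_mul b
  simp only [freeEnergy, smul_eq_mul]
  rw [← integral_const_mul, ← integral_const_mul, ← integral_add hEρ hEσ]
  refine integral_mono_ae (hE _ (convex_admissibleDensities hρ hσ ha hb hab)) (hEρ.add hEσ) ?_
  filter_upwards [hρ.2.1, hσ.2.1] with x hx hy
  have hUx := hU.2 hx hy ha hb hab
  simp only [Pi.add_apply, Pi.smul_apply, smul_eq_mul] at hUx ⊢
  linear_combination hUx

theorem freeEnergy_le_of_isL1LocalMin (hU : ConvexOn ℝ (Icc 0 α) U)
    (hE : ∀ ρ ∈ admissibleDensities μ α M, Integrable (fun x => U (ρ x) + V x * ρ x) μ)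
    {ρ₀ ρ : X → ℝ} (hρ₀ : ρ₀ ∈ admissibleDensities μ α M) (hρ : ρ ∈ admissibleDensities μ α M)
    (hloc : ∃ r, 0 < r ∧ ∀ σ ∈ admissibleDensities μ α M,
      ∫ x, |σ x - ρ₀ x| ∂μ < r → freeEnergy μ U V ρ₀ ≤ freeEnergy μ U V σ) :
    freeEnergy μ U V ρ₀ ≤ freeEnergy μ U V ρ := by
  obtain ⟨r, hr, hmin⟩ := hloc
  refine (convexOn_freeEnergy hU hE).le_of_eventually_le_segment hρ₀ hρ ?_
  have hsmall : Tendsto (fun t => t * ∫ x, |ρ x - ρ₀ x| ∂μ) (𝓝[>] 0) (𝓝 0) := by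
    simpa using ((continuous_mul_const _).tendsto (0 : ℝ)).mono_left nhdsWithin_le_nhds
  filter_upwards [hsmall (gt_mem_nhds hr), Ioo_mem_nhdsGT one_pos] with t htr ht
  simp only [mem_preimage, mem_ofPred_eq] at htr
  refine hmin _ (convex_admissibleDensities hρ₀ hρ (sub_nonneg.2 ht.2.le) ht.1.le
    (sub_add_cancel 1 t)) (lt_of_eq_of_lt ?_ htr)
  rw [← integral_const_mul]
  congr 1 with x
  simp only [Pi.add_apply, Pi.smul_apply, smul_eq_mul]
  rw [show (1 - t) * ρ₀ x + t * ρ x - ρ₀ x = t * (ρ x - ρ₀ x) by ring, abs_mul, abs_of_pos ht.1]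

theorem integrable_lagrangian (C : ℝ) {ρ : X → ℝ} (hρ : Integrable ρ μ)
    (hEρ : Integrable (fun x => U (ρ x) + V x * ρ x) μ) :
    Integrable (fun x => U (ρ x) - (C - V x) * ρ x) μ :=
  (hEρ.sub (hρ.const_mul C)).congr (ae_of_all _ fun x => by simp only [Pi.sub_apply]; ring)

theorem freeEnergy_eq_integral_lagrangian_add (C : ℝ) {ρ : X → ℝ}
    (hρ : ρ ∈ admissibleDensities μ α M) (hEρ : Integrable (fun x => U (ρ x) + V x * ρ x) μ) :
    freeEnergy μ U V ρ = ∫ x, (U (ρ x) - (C - V x) * ρ x) ∂μ + C * M := by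
  rw [← hρ.2.2, ← integral_const_mul,
    ← integral_add (integrable_lagrangian C hρ.1 hEρ) (hρ.1.const_mul C)]
  exact integral_congr_ae (ae_of_all _ fun x => by ring)

theorem lagrangian_ae_le_of_lt (C : ℝ) {ρ₀ ρ : X → ℝ}
    (hmin : ∀ᵐ x ∂μ, ∀ s ∈ Icc 0 α, s ≠ ρ₀ x →
      U (ρ₀ x) - (C - V x) * ρ₀ x < U s - (C - V x) * s)
    (hρ : ∀ᵐ x ∂μ, ρ x ∈ Icc 0 α) :
    (fun x => U (ρ₀ x) - (C - V x) * ρ₀ x) ≤ᵐ[μ] fun x => U (ρ x) - (C - V x) * ρ x := by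
  filter_upwards [hmin, hρ] with x hx hρx
  rcases eq_or_ne (ρ x) (ρ₀ x) with h | h
  · rw [h]
  · exact (hx _ hρx h).le

theorem freeEnergy_le_of_lagrangian_lt (C : ℝ) {ρ₀ ρ : X → ℝ}
    (hρ₀ : ρ₀ ∈ admissibleDensities μ α M) (hρ : ρ ∈ admissibleDensities μ α M)
    (hE₀ : Integrable (fun x => U (ρ₀ x) + V x * ρ₀ x) μ)
    (hE : Integrable (fun x => U (ρ x) + V x * ρ x) μ)
    (hmin : ∀ᵐ x ∂μ, ∀ s ∈ Icc 0 α, s ≠ ρ₀ x →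
      U (ρ₀ x) - (C - V x) * ρ₀ x < U s - (C - V x) * s) :
    freeEnergy μ U V ρ₀ ≤ freeEnergy μ U V ρ := by
  rw [freeEnergy_eq_integral_lagrangian_add C hρ₀ hE₀,
    freeEnergy_eq_integral_lagrangian_add C hρ hE]
  gcongr ?_ + _
  exact integral_mono_ae (integrable_lagrangian C hρ₀.1 hE₀) (integrable_lagrangian C hρ.1 hE)
    (lagrangian_ae_le_of_lt C hmin hρ.2.1)

theorem ae_eq_of_freeEnergy_le_of_lagrangian_lt (C : ℝ) {ρ₀ ρ : X → ℝ}
    (hρ₀ : ρ₀ ∈ admissibleDensities μ α M) (hρ : ρ ∈ admissibleDensities μ α M)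
    (hE₀ : Integrable (fun x => U (ρ₀ x) + V x * ρ₀ x) μ)
    (hE : Integrable (fun x => U (ρ x) + V x * ρ x) μ)
    (hmin : ∀ᵐ x ∂μ, ∀ s ∈ Icc 0 α, s ≠ ρ₀ x →
      U (ρ₀ x) - (C - V x) * ρ₀ x < U s - (C - V x) * s)
    (hF : freeEnergy μ U V ρ ≤ freeEnergy μ U V ρ₀) : ρ =ᵐ[μ] ρ₀ := by
  have hF' := (freeEnergy_le_of_lagrangian_lt C hρ₀ hρ hE₀ hE hmin).antisymm hF
  rw [freeEnergy_eq_integral_lagrangian_add C hρ₀ hE₀,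
    freeEnergy_eq_integral_lagrangian_add C hρ hE, add_left_inj,
    integral_eq_iff_of_ae_le (integrable_lagrangian C hρ₀.1 hE₀)
      (integrable_lagrangian C hρ.1 hE) (lagrangian_ae_le_of_lt C hmin hρ.2.1)] at hF'
  filter_upwards [hF', hmin, hρ.2.1] with x hx hminx hρx
  by_contra h
  exact (hminx _ hρx h).ne hx

end FreeEnergy

theorem truncated_profile_unique_minimiser_general
    (d : ℕ) (Ω : Set (EuclideanSpace ℝ (Fin d)))
    (hΩ_meas : MeasurableSet Ω)
    (hΩ_bdd : Bornology.IsBounded Ω)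
    (α : ℝ) (hα : 0 < α)
    (U : ℝ → ℝ) (hU_cont : ContinuousOn U (Icc 0 α)) (hU_conv : ConvexOn ℝ (Icc 0 α) U)
    (V : EuclideanSpace ℝ (Fin d) → ℝ) (hV_cont : ContinuousOn V Ω)
    (hV_bdd : ∃ B : ℝ, ∀ x ∈ Ω, V x ≤ B) (hV_nonneg : ∀ x ∈ Ω, 0 ≤ V x)
    (U' : ℝ → ℝ)
    (hU'_deriv : ∀ s ∈ Ioo 0 α, HasDerivAt U (U' s) s)
    (hU'_smono : StrictMonoOn U' (Ioo 0 α))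
    (ζl ζh : EReal)
    (hζl_lim : Tendsto (fun s : ℝ => (U' s : EReal)) (𝓝[>] (0:ℝ)) (𝓝 ζl))
    (hζh_lim : Tendsto (fun s : ℝ => (U' s : EReal)) (𝓝[<] α) (𝓝 ζh))
    (g : ℝ → ℝ)
    (hg_low : ∀ ζ : ℝ, (ζ : EReal) ≤ ζl → g ζ = 0)
    (hg_high : ∀ ζ : ℝ, ζh ≤ (ζ : EReal) → g ζ = α)
    (hg_mid : ∀ ζ : ℝ, ζl < (ζ : EReal) → (ζ : EReal) < ζh →
      g ζ ∈ Ioo 0 α ∧ U' (g ζ) = ζ)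
    (M : ℝ)
    (C₀ : ℝ) (hC₀ : ∫ x in Ω, g (C₀ - V x) = M) :
    (Integrable (fun x => g (C₀ - V x)) (volume.restrict Ω) ∧
      (∀ᵐ x ∂(volume.restrict Ω), g (C₀ - V x) ∈ Icc 0 α) ∧
      ∫ x in Ω, g (C₀ - V x) = M) ∧
    (∀ ρ : EuclideanSpace ℝ (Fin d) → ℝ,
      Integrable ρ (volume.restrict Ω) →
      (∀ᵐ x ∂(volume.restrict Ω), ρ x ∈ Icc 0 α) →
      (∫ x in Ω, ρ x) = M →
      ∫ x in Ω, (U (g (C₀ - V x)) + V x * g (C₀ - V x)) ≤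
        ∫ x in Ω, (U (ρ x) + V x * ρ x)) ∧
    (∀ ρh : EuclideanSpace ℝ (Fin d) → ℝ,
      Integrable ρh (volume.restrict Ω) →
      (∀ᵐ x ∂(volume.restrict Ω), ρh x ∈ Icc 0 α) →
      (∫ x in Ω, ρh x) = M →
      (∃ r : ℝ, 0 < r ∧
        ∀ ρ : EuclideanSpace ℝ (Fin d) → ℝ,
          Integrable ρ (volume.restrict Ω) →
          (∀ᵐ x ∂(volume.restrict Ω), ρ x ∈ Icc 0 α) →
          (∫ x in Ω, ρ x) = M →
          (∫ x in Ω, |ρ x - ρh x|) < r →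
          ∫ x in Ω, (U (ρh x) + V x * ρh x) ≤ ∫ x in Ω, (U (ρ x) + V x * ρ x)) →
      ∀ᵐ x ∂(volume.restrict Ω), ρh x = g (C₀ - V x)) := by
  set μ := volume.restrict Ω
  have : IsFiniteMeasure μ := isFiniteMeasure_restrict.2 hΩ_bdd.measure_lt_top.ne
  obtain ⟨B, hB⟩ := hV_bdd
  have hVm : AEStronglyMeasurable V μ := (hV_cont.aemeasurable hΩ_meas).aestronglyMeasurable
  have hVB : ∀ᵐ x ∂μ, ‖V x‖ ≤ B := (ae_restrict_mem hΩ_meas).mono fun x hx =>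
    (Real.norm_of_nonneg (hV_nonneg x hx)).trans_le (hB x hx)
  have hE : ∀ ρ ∈ admissibleDensities μ α M, Integrable (fun x => U (ρ x) + V x * ρ x) μ :=
    fun ρ hρ => integrable_energyDensity hα.le hU_cont hVm hVB hρ
  have hg : IsTruncatedInverse U' 0 α ζl ζh g := ⟨hg_low, hg_high, hg_mid⟩
  have hlag := hg.sub_mul_lt hU_cont hU'_deriv hU'_smono hζl_lim hζh_lim
  have hg_mono := monotone_of_forall_sub_mul_lt (hg.mem_Icc hα.le) hlag
  have hg_mem := ae_of_all μ fun x => hg.mem_Icc hα.le (C₀ - V x)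
  have hρ₀ : (fun x => g (C₀ - V x)) ∈ admissibleDensities μ α M :=
    ⟨Integrable.of_mem_Icc 0 α
      (hg_mono.measurable.comp_aemeasurable (aemeasurable_const.sub hVm.aemeasurable)) hg_mem,
      hg_mem, hC₀⟩
  have hmin := ae_of_all μ fun x => hlag (C₀ - V x)
  refine ⟨hρ₀, fun ρ hρi hρα hρM => freeEnergy_le_of_lagrangian_lt C₀ hρ₀ ⟨hρi, hρα, hρM⟩
    (hE _ hρ₀) (hE _ ⟨hρi, hρα, hρM⟩) hmin, ?_⟩
  rintro ρ hρi hρα hρM ⟨r, hr, hloc⟩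
  have hρ : ρ ∈ admissibleDensities μ α M := ⟨hρi, hρα, hρM⟩
  exact ae_eq_of_freeEnergy_le_of_lagrangian_lt C₀ hρ₀ hρ (hE _ hρ₀) (hE _ hρ) hmin
    (freeEnergy_le_of_isL1LocalMin hU_conv hE hρ hρ₀
      ⟨r, hr, fun σ hσ => hloc σ hσ.1 hσ.2.1 hσ.2.2⟩)

/-- The truncated profile ρ̂⁰ = T_{0,α}∘(U′)⁻¹(C₀ − V) of mass M belongs to 𝒜_M,
is the global minimiser of the free energy on 𝒜_M, and is its unique L¹-local
minimiser. -/
theorem truncated_profile_unique_minimiser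
    (d : ℕ) (Ω : Set (EuclideanSpace ℝ (Fin d)))
    (hΩ_meas : MeasurableSet Ω) (hΩ_ne : Ω.Nonempty) (hΩ_open : IsOpen Ω)
    (hΩ_conn : IsConnected Ω) (hΩ_bdd : Bornology.IsBounded Ω)
    (α : ℝ) (hα : 0 < α)
    (U : ℝ → ℝ) (hU_cont : ContinuousOn U (Icc 0 α)) (hU_conv : ConvexOn ℝ (Icc 0 α) U)
    (V : EuclideanSpace ℝ (Fin d) → ℝ) (hV_cont : ContinuousOn V Ω)
    (hV_bdd : ∃ B : ℝ, ∀ x ∈ Ω, V x ≤ B) (hV_nonneg : ∀ x ∈ Ω, 0 ≤ V x)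
    (U' : ℝ → ℝ)
    (hU'_deriv : ∀ s ∈ Ioo 0 α, HasDerivAt U (U' s) s)
    (hU'_cont : ContinuousOn U' (Ioo 0 α))
    (hU'_smono : StrictMonoOn U' (Ioo 0 α))
    (ζl ζh : EReal) (hζl_ne : ζl ≠ ⊤) (hζh_ne : ζh ≠ ⊥)
    (hζl_lim : Tendsto (fun s : ℝ => (U' s : EReal)) (𝓝[>] (0:ℝ)) (𝓝 ζl))
    (hζh_lim : Tendsto (fun s : ℝ => (U' s : EReal)) (𝓝[<] α) (𝓝 ζh))
    (g : ℝ → ℝ)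
    (hg_low : ∀ ζ : ℝ, (ζ : EReal) ≤ ζl → g ζ = 0)
    (hg_high : ∀ ζ : ℝ, ζh ≤ (ζ : EReal) → g ζ = α)
    (hg_mid : ∀ ζ : ℝ, ζl < (ζ : EReal) → (ζ : EReal) < ζh →
      g ζ ∈ Ioo 0 α ∧ U' (g ζ) = ζ)
    (M : ℝ) (hM_pos : 0 < M) (hM_lt : M < α * (volume Ω).toReal)
    (C₀ : ℝ) (hC₀ : ∫ x in Ω, g (C₀ - V x) = M) :
    (Integrable (fun x => g (C₀ - V x)) (volume.restrict Ω) ∧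
      (∀ᵐ x ∂(volume.restrict Ω), g (C₀ - V x) ∈ Icc 0 α) ∧
      ∫ x in Ω, g (C₀ - V x) = M) ∧
    (∀ ρ : EuclideanSpace ℝ (Fin d) → ℝ,
      Integrable ρ (volume.restrict Ω) →
      (∀ᵐ x ∂(volume.restrict Ω), ρ x ∈ Icc 0 α) →
      (∫ x in Ω, ρ x) = M →
      ∫ x in Ω, (U (g (C₀ - V x)) + V x * g (C₀ - V x)) ≤
        ∫ x in Ω, (U (ρ x) + V x * ρ x)) ∧
    (∀ ρh : EuclideanSpace ℝ (Fin d) → ℝ,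
      Integrable ρh (volume.restrict Ω) →
      (∀ᵐ x ∂(volume.restrict Ω), ρh x ∈ Icc 0 α) →
      (∫ x in Ω, ρh x) = M →
      (∃ r : ℝ, 0 < r ∧
        ∀ ρ : EuclideanSpace ℝ (Fin d) → ℝ,
          Integrable ρ (volume.restrict Ω) →
          (∀ᵐ x ∂(volume.restrict Ω), ρ x ∈ Icc 0 α) →
          (∫ x in Ω, ρ x) = M →
          (∫ x in Ω, |ρ x - ρh x|) < r →
          ∫ x in Ω, (U (ρh x) + V x * ρh x) ≤ ∫ x in Ω, (U (ρ x) + V x * ρ x)) →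
      ∀ᵐ x ∂(volume.restrict Ω), ρh x = g (C₀ - V x)) :=
  truncated_profile_unique_minimiser_general d Ω hΩ_meas hΩ_bdd α hα U hU_cont hU_conv V hV_cont
    hV_bdd hV_nonneg U' hU'_deriv hU'_smono ζl ζh hζl_lim hζh_lim g hg_low hg_high hg_mid M C₀ hC₀
end

section
/- Let ρ̲, ρ̄ ∈ ℝ^N and let H : Q → ℝ^N be mass-conserving and monotone on the coordinate box Q spanned by ρ̲ and ρ̄. If H_i(ρ̲) ≤ H_i(ρ̄) for all i, then ρ̲_i ≤ ρ̄_i for all i. -/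
/-!
Compare `ρ̲` with `σ := ρ̲ ⊔ ρ̄ ≥ ρ̄`. In each coordinate `σ` agrees with `ρ̄` or with `ρ̲` while
dominating it elsewhere, so monotonicity (plus `H ρ̲ ≤ H ρ̄` in the second case) gives
`H σ ≤ H ρ̄`. Summing and using mass conservation, `∑ σ ≤ ∑ ρ̄`; as `σ ≥ ρ̄`, this forces
`σ = ρ̄`, i.e. `ρ̲ ≤ ρ̄`.
-/

variable {ι α : Type*}

theorem Pi.mem_uIcc_iff [Lattice α] {a b ρ : ι → α} :
    ρ ∈ Set.uIcc a b ↔ ∀ i, a i ⊓ b i ≤ ρ i ∧ ρ i ≤ a i ⊔ b i := by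
  simp only [Set.uIcc, Set.mem_Icc, Pi.le_def, Pi.inf_apply, Pi.sup_apply, forall_and]

theorem sup_mem_uIcc [Lattice α] {a b : α} : a ⊔ b ∈ Set.uIcc a b :=
  Set.right_mem_Icc.2 inf_le_sup

def MassConservingOn [Fintype ι] [AddCommMonoid α] (H : (ι → α) → ι → α) (Q : Set (ι → α)) :
    Prop :=
  ∀ ρ ∈ Q, ∑ i, H ρ i = ∑ i, ρ i

-- As `σ i = ρ i`, asking `ρ ≤ σ` is the same as asking `ρ j ≤ σ j` only for `j ≠ i`.
def OffDiagAntitoneOn [LE α] (H : (ι → α) → ι → α) (Q : Set (ι → α)) : Prop :=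
  ∀ i, ∀ ρ ∈ Q, ∀ σ ∈ Q, ρ ≤ σ → σ i = ρ i → H σ i ≤ H ρ i

theorem OffDiagAntitoneOn.apply_sup_le [LinearOrder α] {H : (ι → α) → ι → α} {Q : Set (ι → α)}
    (hmono : OffDiagAntitoneOn H Q) {a b : ι → α} (ha : a ∈ Q) (hb : b ∈ Q) (hab : a ⊔ b ∈ Q)
    (hle : H a ≤ H b) : H (a ⊔ b) ≤ H b := by
  intro i
  rcases le_total (a i) (b i) with hi | hi
  · exact hmono i b hb _ hab le_sup_right (sup_eq_right.2 hi)
  · exact (hmono i a ha _ hab le_sup_left (sup_eq_left.2 hi)).trans (hle i)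

theorem le_of_apply_le_of_massConservingOn [Fintype ι] [AddCommMonoid α] [LinearOrder α]
    [IsOrderedCancelAddMonoid α] {H : (ι → α) → ι → α}
    {Q : Set (ι → α)} (hmass : MassConservingOn H Q) (hmono : OffDiagAntitoneOn H Q)
    {a b : ι → α} (ha : a ∈ Q) (hb : b ∈ Q) (hab : a ⊔ b ∈ Q) (hle : H a ≤ H b) : a ≤ b := by
  have hsum : ∑ i, (a ⊔ b) i ≤ ∑ i, b i := by
    rw [← hmass _ hab, ← hmass _ hb]
    exact Fintype.sum_mono (hmono.apply_sup_le ha hb hab hle)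
  have hsup : a ⊔ b = b :=
    (le_sup_right.eq_of_not_lt fun hlt => (Fintype.sum_strictMono hlt).not_ge hsum).symm
  exact sup_eq_right.1 hsup

/-- Comparison principle for mass-conserving monotone maps on a coordinate box. -/
theorem discrete_comparison_principle
    (N : ℕ) (ρl ρu : Fin N → ℝ)
    (H : (Fin N → ℝ) → (Fin N → ℝ))
    (hmass : ∀ ρ : Fin N → ℝ,
      (∀ i, min (ρl i) (ρu i) ≤ ρ i ∧ ρ i ≤ max (ρl i) (ρu i)) →
      ∑ i, H ρ i = ∑ i, ρ i)
    (hmono : ∀ i : Fin N, ∀ ρ σ : Fin N → ℝ,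
      (∀ j, min (ρl j) (ρu j) ≤ ρ j ∧ ρ j ≤ max (ρl j) (ρu j)) →
      (∀ j, min (ρl j) (ρu j) ≤ σ j ∧ σ j ≤ max (ρl j) (ρu j)) →
      σ i = ρ i → (∀ j, j ≠ i → ρ j ≤ σ j) → H σ i ≤ H ρ i)
    (hle : ∀ i, H ρl i ≤ H ρu i) :
    ∀ i, ρl i ≤ ρu i := by
  have hmass' : MassConservingOn H (Set.uIcc ρl ρu) :=
    fun ρ hρ => hmass ρ (Pi.mem_uIcc_iff.1 hρ)
  have hmono' : OffDiagAntitoneOn H (Set.uIcc ρl ρu) :=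
    fun i ρ hρ σ hσ hρσ hi =>
      hmono i ρ σ (Pi.mem_uIcc_iff.1 hρ) (Pi.mem_uIcc_iff.1 hσ) hi fun j _ => hρσ j
  exact le_of_apply_le_of_massConservingOn hmass' hmono' Set.left_mem_uIcc Set.right_mem_uIcc
    sup_mem_uIcc hle
end
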